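/- Let A be a simple Poisson algebra with identity 1 over a field F of characteristic zero, and let U be an ideal of the Lie algebra {A,A} such that U^[3] = (0), where U^[0] = U and U^[i+1] = {U^[i], U^[i]}. Then {U,A} = (0). -/

import Mathlib

/-- A Poisson bracket on a commutative `F`-algebra `A`: an `F`-bilinear map
`{,} : A × A → A` making `(A, {,})` a Lie algebra and satisfying the Leibniz
rule `{ab, c} = a{b,c} + {a,c}b`. -/
structure PoissonBracket (F : Type*) (A : Type*) [Field F] [CommRing A] [Algebra F A] where
  br : A →ₗ[F] A →ₗ[F] A
  br_self : ∀ a : A, br a a = 0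
  jacobi : ∀ a b c : A, br a (br b c) + br b (br c a) + br c (br a b) = 0
  leibniz : ∀ a b c : A, br (a * b) c = a * br b c + br a c * b

namespace PoissonBracket

variable {F A : Type*} [Field F] [CommRing A] [Algebra F A]

/-- `{A, A}` : the `F`-linear span of all brackets `{a, b}`, `a, b ∈ A`. -/
def lieSpan (P : PoissonBracket F A) : Submodule F A :=
  Submodule.span F {x : A | ∃ a b : A, P.br a b = x}

/-- `{M, N}` : the `F`-linear span of all brackets `{u, v}`, `u ∈ M`, `v ∈ N`. -/
def brSpan (P : PoissonBracket F A) (M N : Submodule F A) : Submodule F A :=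
  Submodule.span F {x : A | ∃ u ∈ M, ∃ v ∈ N, P.br u v = x}

/-- `U` is an ideal of the Lie algebra `{A, A}`. -/
def IsLieIdealOfBrackets (P : PoissonBracket F A) (U : Submodule F A) : Prop :=
  U ≤ P.lieSpan ∧ ∀ x ∈ P.lieSpan, ∀ u ∈ U, P.br x u ∈ U

/-- The derived series `U^[0] = U`, `U^[i+1] = {U^[i], U^[i]}`. -/
def derived (P : PoissonBracket F A) (U : Submodule F A) : ℕ → Submodule F A
  | 0 => U
  | (i + 1) => P.brSpan (P.derived U i) (P.derived U i)

/-- `A` is a simple Poisson algebra: it has no Poisson ideals other than `(0)` and `A`. -/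
def IsSimple (P : PoissonBracket F A) : Prop :=
  ∀ I : Ideal A, (∀ a ∈ I, ∀ b : A, P.br a b ∈ I) → I = ⊥ ∨ I = ⊤

/-- The Poisson center `Z = {a ∈ A | {a, A} = (0)}`. -/
def pCenter (P : PoissonBracket F A) : Submodule F A where
  carrier := {a : A | ∀ b : A, P.br a b = 0}
  add_mem' := by
    intro x y hx hy b
    simp [map_add, hx b, hy b]
  zero_mem' := by
    intro b
    simp
  smul_mem' := by
    intro c x hx b
    simp [map_smul, hx b]

end PoissonBracket

variable {F A : Type*} [Field F] [CommRing A] [Algebra F A]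

open PoissonBracket

/-!
Over a field of characteristic zero a derivation maps nilpotent elements to nilpotent elements,
so the nilradical of `A` is a Poisson ideal and a simple Poisson algebra is reduced. On a reduced
algebra a nilpotent derivation vanishes: if `D^(k+1) = 0` with `k ≥ 1`, then
`D^(2k) (a * a) = (2k choose k) (D^k a)^2`.

If `V` is stable under brackets with `{A, A}` and `{V, V}` is central, then for `v ∈ V` the
element `{v, {v, y}}` lies in `V`, so `(ad v)^4 = 0` and `v` is central. Applied to `U^[2]`,
`U^[1]` and `U^[0]` in turn, this gives `{U, A} = 0`.
-/

namespace Derivation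

open Finset

variable {R : Type*} [CommRing R] [Algebra R A]

theorem leibniz_iterate (D : Derivation R A A) (n : ℕ) (a b : A) :
    D^[n] (a * b) = ∑ ij ∈ antidiagonal n, n.choose ij.1 • (D^[ij.1] a * D^[ij.2] b) := by
  induction n with
  | zero => simp
  | succ n ih =>
    rw [sum_antidiagonal_choose_succ_nsmul (M := A) (fun i j => D^[i] a * D^[j] b) n]
    simp only [Function.iterate_succ_apply', ih, map_sum, map_nsmul, leibniz, smul_eq_mul,
      smul_add, sum_add_distrib]
    congr 1
    refine sum_congr rfl fun ij hij ↦ ?_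
    rw [n.choose_symm_of_eq_add (mem_antidiagonal.1 hij).symm, mul_comm]

variable [IsAddTorsionFree A] (D : Derivation R A A)

theorem isNilpotent_apply {x : A} (hx : IsNilpotent x) : IsNilpotent (D x) := by
  obtain ⟨n, hn⟩ := hx
  have hn' : x ^ (n + 1) = 0 := by rw [pow_succ, hn, zero_mul]
  -- differentiate `x ^ (s + 1) * (D x) ^ (2 * m + 1) = 0` and multiply by `D x`
  have key : ∀ m s, s + m = n → x ^ s * D x ^ (2 * m + 1) = 0 := by
    intro m
    induction m with
    | zero =>
      intro s hs
      rw [add_zero] at hs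
      subst hs
      have h := congrArg D hn'
      rw [leibniz_pow, D.map_zero, add_tsub_cancel_right, smul_eq_mul] at h
      simpa using (smul_eq_zero.mp h).resolve_left (Nat.succ_ne_zero s)
    | succ m ih =>
      intro s hs
      have h0 := ih (s + 1) (by omega)
      have h := congrArg (fun y => D x * D y) h0
      simp only [leibniz, leibniz_pow, D.map_zero, mul_zero, smul_eq_mul, nsmul_eq_mul,
        add_tsub_cancel_right] at h
      push_cast at h
      have h' : (s + 1 : ℕ) • (x ^ s * D x ^ (2 * (m + 1) + 1)) = 0 := by
        rw [nsmul_eq_mul]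
        push_cast
        linear_combination h - (2 * m + 1 : A) * D (D x) * h0
      exact (smul_eq_zero.mp h').resolve_left (Nat.succ_ne_zero s)
  exact ⟨2 * n + 1, by simpa using key n 0 (zero_add n)⟩

theorem iterate_eq_zero_of_iterate_succ_eq_zero [IsReduced A] {k : ℕ} (hk : k ≠ 0)
    (h : ∀ a, D^[k + 1] a = 0) (a : A) : D^[k] a = 0 := by
  have vanish : ∀ m, k < m → ∀ b, D^[m] b = 0 := by
    intro m hm b
    obtain ⟨j, rfl⟩ := Nat.exists_eq_add_of_lt hm
    rw [show k + j + 1 = j + (k + 1) by omega, Function.iterate_add_apply, h, iterate_map_zero]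
  have hsq : (2 * k).choose k • (D^[k] a * D^[k] a) = 0 := by
    rw [← vanish (2 * k) (by omega) (a * a), leibniz_iterate, sum_eq_single (k, k)]
    · rintro ⟨i, j⟩ hij hne
      rw [HasAntidiagonal.mem_antidiagonal] at hij
      by_cases hi : k < i
      · rw [vanish i hi, zero_mul, smul_zero]
      · have hj : k < j := by
          by_contra hj
          exact hne (by rw [Prod.mk.injEq]; omega)
        rw [vanish j hj, mul_zero, smul_zero]
    · exact fun hkk => absurd (HasAntidiagonal.mem_antidiagonal.mpr (two_mul k).symm) hkk
  have hsq' := (smul_eq_zero.mp hsq).resolve_left (Nat.choose_pos (by omega)).ne'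
  exact eq_zero_of_pow_eq_zero (n := 2) (by rw [sq]; exact hsq')

theorem eq_zero_of_isNilpotent [IsReduced A] (hD : IsNilpotent (D : Module.End R A)) : D = 0 := by
  obtain ⟨n, hn⟩ := hD
  have h : ∀ a, D^[n + 1] a = 0 := fun a => by
    have := LinearMap.congr_fun hn (D a)
    rwa [Module.End.pow_apply, coeFn_coe, ← Function.iterate_succ_apply] at this
  clear hn
  induction n with
  | zero => exact ext h
  | succ k ih => exact ih (iterate_eq_zero_of_iterate_succ_eq_zero D k.succ_ne_zero h)

end Derivation

namespace PoissonBracket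

variable (P : PoissonBracket F A)

theorem br_skew (a b : A) : P.br a b = -P.br b a := by
  have h := P.br_self (a + b)
  simp only [map_add, LinearMap.add_apply, P.br_self, zero_add, add_zero] at h
  linear_combination h

theorem leibniz_br (a b c : A) : P.br a (P.br b c) = P.br (P.br a b) c + P.br b (P.br a c) := by
  have h := P.jacobi a b c
  rw [P.br_skew c a, map_neg, P.br_skew c] at h
  linear_combination h

def ad (v : A) : Derivation F A A :=
  Derivation.mk' (P.br v) fun a b => by
    rw [P.br_skew, P.leibniz, P.br_skew b, P.br_skew a, smul_eq_mul, smul_eq_mul]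
    ring

@[simp]
theorem ad_apply (v a : A) : P.ad v a = P.br v a := rfl

theorem isReduced_of_isSimple [IsAddTorsionFree A] (hP : P.IsSimple) : IsReduced A := by
  have hnil : ∀ a ∈ nilradical A, ∀ b, P.br a b ∈ nilradical A := fun a ha b => by
    rw [P.br_skew]
    exact ((P.ad b).isNilpotent_apply ha).neg
  rcases hP (nilradical A) hnil with h | h
  · exact nilradical_eq_bot_iff.mp h
  · obtain ⟨k, hk⟩ := mem_nilradical.mp (h ▸ Submodule.mem_top : (1 : A) ∈ nilradical A)
    have : Subsingleton A := subsingleton_of_zero_eq_one (by rw [← hk, one_pow])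
    infer_instance

theorem br_mem_brSpan {M N : Submodule F A} {x : A} (hM : ∀ u ∈ M, P.br x u ∈ M)
    (hN : ∀ u ∈ N, P.br x u ∈ N) {u : A} (hu : u ∈ P.brSpan M N) : P.br x u ∈ P.brSpan M N := by
  induction hu using Submodule.span_induction with
  | mem y hy =>
    obtain ⟨p, hp, q, hq, rfl⟩ := hy
    rw [P.leibniz_br x p q]
    exact add_mem (Submodule.subset_span ⟨_, hM p hp, q, hq, rfl⟩)
      (Submodule.subset_span ⟨p, hp, _, hN q hq, rfl⟩)
  | zero => simp
  | add y z _ _ hy hz => simpa using add_mem hy hz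
  | smul c y _ hy => simpa using Submodule.smul_mem _ c hy

theorem br_mem_derived {U : Submodule F A} {x : A} (hU : ∀ u ∈ U, P.br x u ∈ U) (i : ℕ) :
    ∀ u ∈ P.derived U i, P.br x u ∈ P.derived U i := by
  induction i with
  | zero => exact hU
  | succ i ih => exact fun u hu => P.br_mem_brSpan ih ih hu

theorem le_pCenter_of_brSpan_le_pCenter [IsAddTorsionFree A] [IsReduced A] {V : Submodule F A}
    (hV : ∀ x ∈ P.lieSpan, ∀ u ∈ V, P.br x u ∈ V) (hVV : P.brSpan V V ≤ P.pCenter) :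
    V ≤ P.pCenter := by
  intro v hv
  have hnil : IsNilpotent (P.ad v : Module.End F A) := by
    refine ⟨4, LinearMap.ext fun y => ?_⟩
    have hw : P.br v (P.br v y) ∈ V := by
      rw [P.br_skew]
      exact neg_mem (hV _ (Submodule.subset_span ⟨v, y, rfl⟩) v hv)
    have hc := hVV (Submodule.subset_span ⟨v, hv, _, hw, rfl⟩) v
    rw [Module.End.pow_apply, Derivation.coeFn_coe]
    simp only [Function.iterate_succ_apply', Function.iterate_zero_apply, ad_apply]
    rw [P.br_skew, hc, neg_zero, LinearMap.zero_apply]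
  exact fun b => by simpa using DFunLike.congr_fun ((P.ad v).eq_zero_of_isNilpotent hnil) b

end PoissonBracket

theorem solvable_ideal_brackets_eq_zero_general [CharZero F]
    (P : PoissonBracket F A) (hP : P.IsSimple) (U : Submodule F A)
    (hU : P.IsLieIdealOfBrackets U) (h3 : P.derived U 3 = ⊥) :
    ∀ u ∈ U, ∀ a : A, P.br u a = 0 := by
  have := IsAddTorsionFree.of_isTorsionFree F A
  have := P.isReduced_of_isSimple hP
  have step : ∀ i, P.derived U (i + 1) ≤ P.pCenter → P.derived U i ≤ P.pCenter := fun i =>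
    P.le_pCenter_of_brSpan_le_pCenter fun x hx => P.br_mem_derived (hU.2 x hx) i
  exact step 0 <| step 1 <| step 2 <| h3 ▸ bot_le

/-- **Lemma 7.** In a simple Poisson algebra with `1` over a field of characteristic
zero, every ideal `U` of the Lie algebra `{A, A}` with `U^[3] = 0` satisfies
`{U, A} = 0`. -/
theorem solvable_ideal_brackets_eq_zero [CharZero F] [Nontrivial A]
    (P : PoissonBracket F A) (hP : P.IsSimple) (U : Submodule F A)
    (hU : P.IsLieIdealOfBrackets U) (h3 : P.derived U 3 = ⊥) :
    ∀ u ∈ U, ∀ a : A, P.br u a = 0 :=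
  solvable_ideal_brackets_eq_zero_general P hP U hU h3
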